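/- arXiv:cs/0010037 — 2 statements merged into one kernel-verified Lean document; each statement's English description precedes it below -/
import Mathlib

section
/- If a meta theory Σ is fuzzy-unsatisfiable then its crisp projection ⌊Σ⌋ is classically (two-valued) unsatisfiable. -/
/-- Propositional formulas over letters `α`, with ⊤, ⊥, ∧, ∨, ¬. -/
inductive PForm (α : Type) : Type
  | top : PForm α
  | bot : PForm α
  | letter : α → PForm α
  | and : PForm α → PForm α → PForm α
  | or : PForm α → PForm α → PForm α
  | neg : PForm α → PForm α

/-- Fuzzy evaluation: min for ∧, max for ∨, 1−x for ¬. -/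
def feval {α : Type} (I : α → ℝ) : PForm α → ℝ
  | .top => 1
  | .bot => 0
  | .letter p => I p
  | .and A B => min (feval I A) (feval I B)
  | .or A B => max (feval I A) (feval I B)
  | .neg A => 1 - feval I A

/-- A fuzzy interpretation maps letters into [0,1]. -/
def IsFuzzy {α : Type} (I : α → ℝ) : Prop := ∀ p, I p ∈ Set.Icc (0:ℝ) 1

/-- Meta propositions in NNF: ∧/∨ combinations of meta literals
⟨p ≥ n⟩, ⟨p ≤ n⟩, ⟨p > n⟩, ⟨p < n⟩ over propositional letters p. -/
inductive NMeta (α : Type) : Type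
  | ge : α → ℝ → NMeta α
  | le : α → ℝ → NMeta α
  | gt : α → ℝ → NMeta α
  | lt : α → ℝ → NMeta α
  | and : NMeta α → NMeta α → NMeta α
  | or : NMeta α → NMeta α → NMeta α

/-- Satisfaction of an NNF meta proposition by a fuzzy interpretation. -/
def nsat {α : Type} (I : α → ℝ) : NMeta α → Prop
  | .ge p n => n ≤ I p
  | .le p n => I p ≤ n
  | .gt p n => n < I p
  | .lt p n => I p < n
  | .and ψ φ => nsat I ψ ∧ nsat I φ
  | .or ψ φ => nsat I ψ ∨ nsat I φ

/-- All the bounds n occurring in the meta proposition lie in [0,1], and no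
trivial meta letters occur (⟨p ≥ n⟩ with n > 0, ⟨p ≤ n⟩ with n < 1,
⟨p > n⟩ with n < 1, ⟨p < n⟩ with n > 0). -/
def WellFormed {α : Type} : NMeta α → Prop
  | .ge _ n => 0 < n ∧ n ≤ 1
  | .le _ n => 0 ≤ n ∧ n < 1
  | .gt _ n => 0 ≤ n ∧ n < 1
  | .lt _ n => 0 < n ∧ n ≤ 1
  | .and ψ φ => WellFormed ψ ∧ WellFormed φ
  | .or ψ φ => WellFormed ψ ∧ WellFormed φ

/-- Sub-normalised: every ⟨p ≥ n⟩ has n ≤ 0.5, every ⟨p ≤ n⟩ has n ≥ 0.5,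
every ⟨p > n⟩ has n < 0.5, every ⟨p < n⟩ has n > 0.5 (with n ∈ [0,1]). -/
def SubNorm {α : Type} : NMeta α → Prop
  | .ge _ n => 0 ≤ n ∧ n ≤ 1/2
  | .le _ n => 1/2 ≤ n ∧ n ≤ 1
  | .gt _ n => 0 ≤ n ∧ n < 1/2
  | .lt _ n => 1/2 < n ∧ n ≤ 1
  | .and ψ φ => SubNorm ψ ∧ SubNorm φ
  | .or ψ φ => SubNorm ψ ∧ SubNorm φ

/-- Two-valued (Boolean) evaluation of propositions. -/
def beval {α : Type} (v : α → Bool) : PForm α → Bool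
  | .top => true
  | .bot => false
  | .letter p => v p
  | .and A B => beval v A && beval v B
  | .or A B => beval v A || beval v B
  | .neg A => !(beval v A)

/-- The crisp projection ⌊·⌋ of meta propositions: ⟨p ≥ n⟩, ⟨p > n⟩ ↦ p;
⟨p ≤ n⟩, ⟨p < n⟩ ↦ ¬p; commuting with ∧, ∨ (negations are pushed to literals
since meta propositions are in NNF, e.g. ⌊¬⟨p ≥ n⟩⌋ = ⌊⟨p < n⟩⌋ = ¬p). -/
def crisp {α : Type} : NMeta α → PForm α
  | .ge p _ => PForm.letter p
  | .gt p _ => PForm.letter p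
  | .le p _ => PForm.neg (PForm.letter p)
  | .lt p _ => PForm.neg (PForm.letter p)
  | .and ψ φ => PForm.and (crisp ψ) (crisp φ)
  | .or ψ φ => PForm.or (crisp ψ) (crisp φ)


private lemma crisp_to_nsat {α : Type} (v : α → Bool) (ψ : NMeta α)
    (hwf : WellFormed ψ) (h : beval v (crisp ψ) = true) :
    nsat (fun p => if v p then (1:ℝ) else 0) ψ := by
  induction ψ with
  | ge p n =>
      simp [crisp, beval] at h
      simp [nsat, h]; exact hwf.2
  | le p n =>
      simp [crisp, beval] at h
      simp [nsat, h]; exact hwf.1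
  | gt p n =>
      simp [crisp, beval] at h
      simp [nsat, h]; exact hwf.2
  | lt p n =>
      simp [crisp, beval] at h
      simp [nsat, h]; exact hwf.1
  | and ψ φ ihψ ihφ =>
      simp [crisp, beval] at h
      exact ⟨ihψ hwf.1 h.1, ihφ hwf.2 h.2⟩
  | or ψ φ ihψ ihφ =>
      simp [crisp, beval] at h
      rcases h with h | h
      · exact Or.inl (ihψ hwf.1 h)
      · exact Or.inr (ihφ hwf.2 h)

/-- if a meta theory Σ is fuzzy-unsatisfiable then its crisp
projection ⌊Σ⌋ is classically unsatisfiable. -/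
theorem fuzzy_unsat_crisp_unsat {α : Type} (T : Set (NMeta α)) (hfin : T.Finite)
    (hwf : ∀ ψ ∈ T, WellFormed ψ)
    (hunsat : ¬ ∃ I : α → ℝ, IsFuzzy I ∧ ∀ ψ ∈ T, nsat I ψ) :
    ¬ ∃ v : α → Bool, ∀ ψ ∈ T, beval v (crisp ψ) = true := by
  rintro ⟨v, hv⟩
  exact hunsat ⟨fun p => if v p then 1 else 0,
    fun p => by dsimp; split <;> simp,
    fun ψ hψ => crisp_to_nsat v ψ (hwf ψ hψ) (hv ψ hψ)⟩
end

section
/- If a meta theory Σ fuzzy-entails a meta proposition ψ, then ⌊Σ⌋ classically entails ⌊ψ⌋ (there cannot be fuzzy entailment without classical entailment). -/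
def boolToReal (v : α → Bool) (p : α) : ℝ := if v p then 1 else 0

lemma boolToReal_fuzzy {α : Type} (v : α → Bool) : IsFuzzy (boolToReal v) := by
  intro p; unfold boolToReal; split <;> constructor <;> norm_num

lemma nsat_iff_beval {α : Type} (v : α → Bool) (φ : NMeta α) (hwf : WellFormed φ) :
    nsat (boolToReal v) φ ↔ beval v (crisp φ) = true := by
  induction φ with
  | ge p n =>
      simp only [nsat, crisp, beval, boolToReal]
      obtain ⟨h1, h2⟩ := hwf
      split <;> simp_all <;> linarith
  | le p n =>
      simp only [nsat, crisp, beval, boolToReal]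
      obtain ⟨h1, h2⟩ := hwf
      split <;> simp_all <;> linarith
  | gt p n =>
      simp only [nsat, crisp, beval, boolToReal]
      obtain ⟨h1, h2⟩ := hwf
      split <;> simp_all <;> linarith
  | lt p n =>
      simp only [nsat, crisp, beval, boolToReal]
      obtain ⟨h1, h2⟩ := hwf
      split <;> simp_all <;> linarith
  | and ψ φ ih1 ih2 =>
      simp only [nsat, crisp, beval, Bool.and_eq_true]
      exact and_congr (ih1 hwf.1) (ih2 hwf.2)
  | or ψ φ ih1 ih2 =>
      simp only [nsat, crisp, beval, Bool.or_eq_true]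
      exact or_congr (ih1 hwf.1) (ih2 hwf.2)

/-- if Σ fuzzy-entails ψ then ⌊Σ⌋ classically entails ⌊ψ⌋. -/
theorem fuzzy_entails_crisp_entails {α : Type} (T : Set (NMeta α)) (hfin : T.Finite)
    (ψ : NMeta α) (hwfT : ∀ φ ∈ T, WellFormed φ) (hwf : WellFormed ψ)
    (h : ∀ I : α → ℝ, IsFuzzy I → (∀ φ ∈ T, nsat I φ) → nsat I ψ) :
    ∀ v : α → Bool, (∀ φ ∈ T, beval v (crisp φ) = true) → beval v (crisp ψ) = true := by
  intro v hv
  have := h (boolToReal v) (boolToReal_fuzzy v) (fun φ hφ =>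
    (nsat_iff_beval v φ (hwfT φ hφ)).mpr (hv φ hφ))
  exact (nsat_iff_beval v ψ hwf).mp this
end
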